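/- arXiv:1709.03157 — 3 statements merged into one kernel-verified Lean document; each statement's English description precedes it below -/
import Mathlib

section
/- Let p, p_1 be complex numbers with |p| < 1 and |p_1| < 1, and suppose p \neq p_1. Then \int_0^{2\pi} \frac{dt}{|e^{it}-p|^2 |e^{it}-p_1|^2} = 2\pi \frac{1 - |p|^2 |p_1|^2}{(1-|p|^2)(1-|p_1|^2)|1 - p \overline{p_1}|^2}. -/
/-!
On the unit circle `1 / ‖z - a‖ ^ 2 = P_a(z) / (1 - ‖a‖ ^ 2)`, where `P_a` is the Poisson kernel of
the unit disc, and moreover `P_a(z) = P_{ā z}(1) = Re ((1 + ā z) / (1 - ā z))`, which as a function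
of `z` is harmonic near the closed disc. The Poisson integral formula therefore gives
`⨍ P_p · P_{p₁} = P_{p̄₁ p}(1) = (1 - ‖p‖ ^ 2 ‖p₁‖ ^ 2) / ‖1 - p p̄₁‖ ^ 2`.
-/

open Complex ComplexConjugate Metric InnerProductSpace

lemma poissonKernel_zero_of_norm_eq_one {z : ℂ} (hz : ‖z‖ = 1) (w : ℂ) :
    poissonKernel 0 w z = (1 - ‖w‖ ^ 2) / ‖z - w‖ ^ 2 := by
  simp [poissonKernel, hz]

lemma norm_sub_eq_norm_one_sub_conj_mul {z : ℂ} (hz : ‖z‖ = 1) (w : ℂ) :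
    ‖z - w‖ = ‖1 - conj w * z‖ := by
  have hzz : conj z * z = 1 := by
    rw [mul_comm, mul_conj, normSq_eq_norm_sq, hz]; simp
  calc ‖z - w‖ = ‖conj (z - w) * z‖ := by rw [norm_mul, Complex.norm_conj, hz, mul_one]
    _ = ‖1 - conj w * z‖ := by rw [map_sub, sub_mul, hzz]

lemma poissonKernel_zero_eq_poissonKernel_conj_mul {z : ℂ} (hz : ‖z‖ = 1) (w : ℂ) :
    poissonKernel 0 w z = poissonKernel 0 (conj w * z) 1 := by
  rw [poissonKernel_zero_of_norm_eq_one hz, poissonKernel_zero_of_norm_eq_one norm_one,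
    norm_sub_eq_norm_one_sub_conj_mul hz, norm_mul, hz, Complex.norm_conj, mul_one]

lemma harmonicOnNhd_poissonKernel_conj_mul {w : ℂ} (hw : ‖w‖ < 1) :
    HarmonicOnNhd (fun z ↦ poissonKernel 0 (conj w * z) 1) (closedBall 0 1) := by
  intro z hz
  have hden : 1 - conj w * z ≠ 0 := by
    refine sub_ne_zero.mpr fun h ↦ ?_
    have : ‖conj w * z‖ < 1 := by
      rw [norm_mul, Complex.norm_conj]
      exact mul_lt_one_of_nonneg_of_lt_one_left (norm_nonneg _) hw (by simpa using hz)
    simp [← h] at this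
  have : AnalyticAt ℂ (fun z ↦ herglotzRieszKernel 0 (conj w * z) 1) z := by
    simp only [herglotzRieszKernel, sub_zero]
    fun_prop (disch := exact hden)
  simpa [poissonKernel_eq_re_herglotzRieszKernel] using this.harmonicAt_re

lemma circleAverage_poissonKernel_mul_poissonKernel {p q : ℂ} (hp : ‖p‖ < 1) (hq : ‖q‖ < 1) :
    Real.circleAverage (poissonKernel 0 p * poissonKernel 0 q) 0 1
      = poissonKernel 0 (conj q * p) 1 := by
  rw [← (harmonicOnNhd_poissonKernel_conj_mul hq).circleAverage_poissonKernel_smul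
    (mem_ball_zero_iff.mpr hp)]
  refine Real.circleAverage_congr_sphere fun z hz ↦ ?_
  have hz : ‖z‖ = 1 := by simpa using hz
  simp [poissonKernel_zero_eq_poissonKernel_conj_mul hz q]

theorem stmt_4_general (p p₁ : ℂ) (hp : ‖p‖ < 1) (hp₁ : ‖p₁‖ < 1) :
    ∫ t in (0:ℝ)..(2 * Real.pi),
        1 / ((‖Complex.exp (t * Complex.I) - p‖) ^ 2 *
             (‖Complex.exp (t * Complex.I) - p₁‖) ^ 2)
      = 2 * Real.pi * (1 - (‖p‖) ^ 2 * (‖p₁‖) ^ 2) /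
          ((1 - (‖p‖) ^ 2) * (1 - (‖p₁‖) ^ 2) *
           (‖1 - p * (starRingEnd ℂ) p₁‖) ^ 2) := by
  have hd : (1 - ‖p‖ ^ 2) * (1 - ‖p₁‖ ^ 2) ≠ 0 := by
    have h : 0 < 1 - ‖p‖ ^ 2 := by nlinarith [norm_nonneg p]
    have h₁ : 0 < 1 - ‖p₁‖ ^ 2 := by nlinarith [norm_nonneg p₁]
    exact (mul_pos h h₁).ne'
  have hintegrand (t : ℝ) : 1 / (‖exp (t * I) - p‖ ^ 2 * ‖exp (t * I) - p₁‖ ^ 2)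
      = (poissonKernel 0 p * poissonKernel 0 p₁) (circleMap 0 1 t)
        / ((1 - ‖p‖ ^ 2) * (1 - ‖p₁‖ ^ 2)) := by
    have hz : ‖circleMap 0 1 t‖ = 1 := by simp
    rw [Pi.mul_apply, poissonKernel_zero_of_norm_eq_one hz, poissonKernel_zero_of_norm_eq_one hz,
      div_mul_div_comm, div_div_cancel_left' hd, one_div]
    simp only [circleMap, zero_add, ofReal_one, one_mul]
  have hintegral : ∫ t in (0:ℝ)..(2 * Real.pi),
      (poissonKernel 0 p * poissonKernel 0 p₁) (circleMap 0 1 t)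
        = 2 * Real.pi * poissonKernel 0 (conj p₁ * p) 1 := by
    rw [← circleAverage_poissonKernel_mul_poissonKernel hp hp₁, Real.circleAverage_def,
      smul_eq_mul, mul_inv_cancel_left₀ (by positivity)]
  simp_rw [hintegrand]
  rw [intervalIntegral.integral_div, hintegral, poissonKernel_zero_of_norm_eq_one norm_one,
    norm_mul, Complex.norm_conj, mul_comm (conj p₁) p]
  field_simp

theorem stmt_4 (p p₁ : ℂ) (hp : ‖p‖ < 1) (hp₁ : ‖p₁‖ < 1)
    (hne : p ≠ p₁) :
    ∫ t in (0:ℝ)..(2 * Real.pi),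
        1 / ((‖Complex.exp (t * Complex.I) - p‖) ^ 2 *
             (‖Complex.exp (t * Complex.I) - p₁‖) ^ 2)
      = 2 * Real.pi * (1 - (‖p‖) ^ 2 * (‖p₁‖) ^ 2) /
          ((1 - (‖p‖) ^ 2) * (1 - (‖p₁‖) ^ 2) *
           (‖1 - p * (starRingEnd ℂ) p₁‖) ^ 2) :=
  stmt_4_general p p₁ hp hp₁
end

section
/- Let p be a complex number with |p| < 1. Then \int_0^{2\pi} \frac{dt}{|e^{it}-p|^4} = 2\pi \left( \frac{1}{(1-|p|^2)^2} + \frac{2|p|^2}{(1-|p|^2)^3} \right). -/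
/-!
On the unit circle `|z - p|² = (z - p)(1 - p̄ z) / z`, so the average of `|z - p|⁻⁴` over the
circle is `(2πi)⁻¹ ∮ z / ((z - p)² (1 - p̄ z)²) dz`. As `z / (1 - p̄ z)²` is holomorphic on a
neighbourhood of the closed disc, Cauchy's formula for the derivative evaluates this to its
derivative at `p`, namely `(1 + |p|²) / (1 - |p|²)³ = 1 / (1 - |p|²)² + 2|p|² / (1 - |p|²)³`.
-/

open Complex ComplexConjugate Metric Real

theorem hasDerivAt_div_one_sub_mul_sq {𝕜 : Type*} [NontriviallyNormedField 𝕜] {q w : 𝕜}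
    (hw : 1 - q * w ≠ 0) :
    HasDerivAt (fun z => z / (1 - q * z) ^ 2) ((1 + q * w) / (1 - q * w) ^ 3) w := by
  refine ((hasDerivAt_id' w).div ((((hasDerivAt_id' w).const_mul q).const_sub 1).pow 2)
    (pow_ne_zero 2 hw)).congr_deriv ?_
  simp only [Pi.pow_apply]
  field_simp
  ring

namespace Complex

theorem ofReal_circleAverage (f : ℂ → ℝ) (c : ℂ) (R : ℝ) :
    ((circleAverage f c R : ℝ) : ℂ) = circleAverage (fun z => (f z : ℂ)) c R := by
  simp only [circleAverage_def, real_smul, smul_eq_mul, ofReal_mul,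
    intervalIntegral.integral_ofReal]

theorem ofReal_sq_norm_sub_of_norm_eq_one {z : ℂ} (hz : ‖z‖ = 1) (p : ℂ) :
    ((‖z - p‖ ^ 2 : ℝ) : ℂ) = (z - p) * (1 - conj p * z) / z := by
  have hz0 : z ≠ 0 := by rintro rfl; simp at hz
  rw [ofReal_pow, ← mul_conj', map_sub, ← inv_eq_conj hz]
  field_simp

theorem inv_mul_inv_norm_sub_pow_four_of_norm_eq_one {z : ℂ} (hz : ‖z‖ = 1) (p : ℂ) :
    z⁻¹ * ((‖z - p‖ ^ 4)⁻¹ : ℝ) = ((z - p) ^ 2)⁻¹ * (z / (1 - conj p * z) ^ 2) := by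
  have hz0 : z ≠ 0 := by rintro rfl; simp at hz
  have h4 : ((‖z - p‖ ^ 4 : ℝ) : ℂ) = ((‖z - p‖ ^ 2 : ℝ) : ℂ) ^ 2 := by push_cast; ring
  rw [ofReal_inv, h4, ofReal_sq_norm_sub_of_norm_eq_one hz]
  field_simp

theorem two_pi_I_inv_smul_circleIntegral_sub_sq_inv_smul_div_one_sub_mul_sq {p q : ℂ}
    (hp : ‖p‖ < 1) (hq : ‖q‖ < 1) :
    (2 * π * I)⁻¹ • ∮ z in C(0, 1), ((z - p) ^ 2)⁻¹ • (z / (1 - q * z) ^ 2)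
      = (1 + q * p) / (1 - q * p) ^ 3 := by
  have hU : IsOpen {z : ℂ | 1 - q * z ≠ 0} := isOpen_ne_fun (by fun_prop) continuous_const
  have hball : closedBall (0 : ℂ) 1 ⊆ {z : ℂ | 1 - q * z ≠ 0} := by
    intro z hz h
    have hqz : ‖q * z‖ < 1 := by
      rw [norm_mul]
      exact mul_lt_one_of_nonneg_of_lt_one_left (norm_nonneg _) hq (by simpa using hz)
    rw [← sub_eq_zero.mp h, norm_one] at hqz
    exact lt_irrefl 1 hqz
  have hf : DifferentiableOn ℂ (fun z : ℂ => z / (1 - q * z) ^ 2) {z | 1 - q * z ≠ 0} :=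
    fun w hw => (hasDerivAt_div_one_sub_mul_sq hw).differentiableAt.differentiableWithinAt
  have hp' : p ∈ ball (0 : ℂ) 1 := by simpa using hp
  rw [two_pi_I_inv_smul_circleIntegral_sub_sq_inv_smul_of_differentiable hU hball hf hp']
  exact (hasDerivAt_div_one_sub_mul_sq (hball (ball_subset_closedBall hp'))).deriv

theorem circleAverage_inv_norm_sub_pow_four {p : ℂ} (hp : ‖p‖ < 1) :
    circleAverage (fun z : ℂ => (‖z - p‖ ^ 4)⁻¹) 0 1 = (1 + ‖p‖ ^ 2) / (1 - ‖p‖ ^ 2) ^ 3 := by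
  apply ofReal_injective
  have hq : ‖conj p‖ < 1 := by rwa [norm_conj]
  calc ((circleAverage (fun z : ℂ => (‖z - p‖ ^ 4)⁻¹) 0 1 : ℝ) : ℂ)
      = circleAverage (fun z : ℂ => (((‖z - p‖ ^ 4)⁻¹ : ℝ) : ℂ)) 0 1 := ofReal_circleAverage _ 0 1
    _ = (2 * π * I)⁻¹ • ∮ z in C(0, 1), ((z - p) ^ 2)⁻¹ • (z / (1 - conj p * z) ^ 2) := by
        rw [circleAverage_eq_circleIntegral one_ne_zero]
        congr 1
        refine circleIntegral.integral_congr zero_le_one fun z hz => ?_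
        simpa using inv_mul_inv_norm_sub_pow_four_of_norm_eq_one (by simpa using hz) p
    _ = _ := by
        rw [two_pi_I_inv_smul_circleIntegral_sub_sq_inv_smul_div_one_sub_mul_sq hp hq, conj_mul']
        push_cast
        ring

end Complex

theorem stmt_5 (p : ℂ) (hp : ‖p‖ < 1) :
    ∫ t in (0:ℝ)..(2 * Real.pi),
        1 / (‖Complex.exp (t * Complex.I) - p‖) ^ 4
      = 2 * Real.pi * (1 / (1 - (‖p‖) ^ 2) ^ 2 +
          2 * (‖p‖) ^ 2 / (1 - (‖p‖) ^ 2) ^ 3) := by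
  have h := circleAverage_inv_norm_sub_pow_four hp
  rw [circleAverage_def, smul_eq_mul] at h
  simp only [circleMap, zero_add, ofReal_one, one_mul, one_div] at h ⊢
  have hr : 1 - ‖p‖ ^ 2 ≠ 0 := by nlinarith [norm_nonneg p]
  rw [← mul_inv_cancel_left₀ (by positivity : 2 * π ≠ 0) (∫ _ in _.._, _), h]
  field_simp
  ring
end

section
/- Let z_1 = (0,0) and z_2 = (0,1) in \mathbb{R}^2, and let S = \mathrm{span}\{1, x, y, xy, y^2, y^3\} \subset \mathbb{R}[x,y]. Then the linear map from S to \mathbb{R}^6 given by p \mapsto (p(z_1), \partial_x p(z_1), \partial_y p(z_1), p(z_2), \partial_x p(z_2), \partial_y p(z_2)) is a bijection. -/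
open MvPolynomial

noncomputable def qpoly (v : ℝ×ℝ×ℝ×ℝ×ℝ×ℝ) : MvPolynomial (Fin 2) ℝ :=
  C v.1 + C v.2.1 * X 0 + C v.2.2.1 * X 1 + C (v.2.2.2.2.1 - v.2.1) * (X 0 * X 1)
  + C (3*v.2.2.2.1 - 3*v.1 - 2*v.2.2.1 - v.2.2.2.2.2) * (X 1)^2
  + C (2*v.1 + v.2.2.1 - 2*v.2.2.2.1 + v.2.2.2.2.2) * (X 1)^3

lemma qpoly_mem (v : ℝ×ℝ×ℝ×ℝ×ℝ×ℝ) :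
    qpoly v ∈ Submodule.span ℝ
      ({1, X 0, X 1, X 0 * X 1, (X 1) ^ 2, (X 1) ^ 3} :
        Set (MvPolynomial (Fin 2) ℝ)) := by
  unfold qpoly
  have h : ∀ (r : ℝ) (g : MvPolynomial (Fin 2) ℝ),
      g ∈ ({1, X 0, X 1, X 0 * X 1, (X 1) ^ 2, (X 1) ^ 3} :
        Set (MvPolynomial (Fin 2) ℝ)) →
      C r * g ∈ Submodule.span ℝ
        ({1, X 0, X 1, X 0 * X 1, (X 1) ^ 2, (X 1) ^ 3} :
          Set (MvPolynomial (Fin 2) ℝ)) := by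
    intro r g hg
    rw [← smul_eq_C_mul]
    exact Submodule.smul_mem _ _ (Submodule.subset_span hg)
  have h1 := h v.1 1 (by simp)
  rw [mul_one] at h1
  refine add_mem (add_mem (add_mem (add_mem (add_mem h1 ?_) ?_) ?_) ?_) ?_ <;>
    apply h <;> simp

lemma qpoly_add (a1 a2 a3 a4 a5 a6 b1 b2 b3 b4 b5 b6 : ℝ) :
    qpoly (a1+b1, a2+b2, a3+b3, a4+b4, a5+b5, a6+b6)
      = qpoly (a1,a2,a3,a4,a5,a6) + qpoly (b1,b2,b3,b4,b5,b6) := by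
  simp only [qpoly, map_add, map_sub, map_mul, map_neg, map_ofNat]
  ring

lemma qpoly_smul (r a1 a2 a3 a4 a5 a6 : ℝ) :
    qpoly (r*a1, r*a2, r*a3, r*a4, r*a5, r*a6) = r • qpoly (a1,a2,a3,a4,a5,a6) := by
  simp only [qpoly, smul_eq_C_mul, map_add, map_sub, map_mul, map_neg, map_ofNat]
  ring

/-- Hermite interpolation (values and both first partials) at the nodes
`z₁ = (0,0)` and `z₂ = (0,1)` is regular on the de Boor–Ron least interpolant
space `S = span{1, x, y, xy, y², y³}`. Here `x = X 0`, `y = X 1`. -/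
theorem stmt_13 :
    Function.Bijective
      (fun p : Submodule.span ℝ
          ({1, X 0, X 1, X 0 * X 1, (X 1) ^ 2, (X 1) ^ 3} :
            Set (MvPolynomial (Fin 2) ℝ)) =>
        (eval ![(0:ℝ), 0] (p : MvPolynomial (Fin 2) ℝ),
         eval ![(0:ℝ), 0] (pderiv 0 (p : MvPolynomial (Fin 2) ℝ)),
         eval ![(0:ℝ), 0] (pderiv 1 (p : MvPolynomial (Fin 2) ℝ)),
         eval ![(0:ℝ), 1] (p : MvPolynomial (Fin 2) ℝ),
         eval ![(0:ℝ), 1] (pderiv 0 (p : MvPolynomial (Fin 2) ℝ)),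
         eval ![(0:ℝ), 1] (pderiv 1 (p : MvPolynomial (Fin 2) ℝ)))) := by
  rw [Function.bijective_iff_has_inverse]
  refine ⟨fun v => ⟨qpoly v, qpoly_mem v⟩, ?_, ?_⟩
  · -- left inverse
    rintro ⟨p, hp⟩
    apply Subtype.ext
    simp only
    induction hp using Submodule.span_induction with
    | mem x hx =>
      rcases hx with h | h | h | h | h | h <;> subst h <;>
        simp [qpoly, pderiv_mul, pderiv_pow, map_ofNat] <;> ring
    | zero => simp [qpoly]
    | add x y hx hy ihx ihy =>
      simp only [map_add, qpoly_add, ihx, ihy]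
    | smul r x hx ih =>
      have hpd : ∀ i : Fin 2, pderiv i (r • x) = r • pderiv i x :=
        fun i => (pderiv i).map_smul r x
      simp only [hpd, smul_eval, smul_eq_mul, qpoly_smul, ih]
  · -- right inverse
    intro v
    obtain ⟨a, b, c, d, e, f⟩ := v
    simp only [qpoly, Prod.mk.injEq]
    refine ⟨?_, ?_, ?_, ?_, ?_, ?_⟩ <;> · try simp [pderiv_mul, pderiv_pow]
                                          try ring
end
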